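/- arXiv:1204.5258 — 4 statements merged into one kernel-verified Lean document; each statement's English description precedes it below -/
import Mathlib

section
/- Let Γ be a directed graph and F a field. Let C₁ = (v₁,…,v_m; e₁,…,e_m) and C₂ = (w₁,…,w_k; f₁,…,f_k) be distinct cycles of Γ with a common vertex v₁ = w₁. Set p = e₁…e_m and q = f₁…f_k, regarded as elements of the Leavitt path algebra L(Γ). Then p and q generate a free (non-unital) F-subalgebra of L(Γ): the evaluations u(p,q), as u ranges over all nonempty words in two letters, are linearly independent over F. -/
open scoped BigOperators

section LeavittSetup

variable {V E : Type}

/-- Generators of the Leavitt path algebra of a graph: vertices, edges, and ghost (star) edges. -/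
inductive LGen (V E : Type) : Type
  | vert : V → LGen V E
  | edge : E → LGen V E
  | star : E → LGen V E

variable (F : Type) [Field F]

/-- The vertex generator inside the free algebra. -/
noncomputable def gvert (v : V) : FreeAlgebra F (LGen V E) := FreeAlgebra.ι F (LGen.vert v)

/-- The edge generator inside the free algebra. -/
noncomputable def gedge (e : E) : FreeAlgebra F (LGen V E) := FreeAlgebra.ι F (LGen.edge e)

/-- The ghost edge generator `e*` inside the free algebra. -/
noncomputable def gstar (e : E) : FreeAlgebra F (LGen V E) := FreeAlgebra.ι F (LGen.star e)

variable (s r : E → V)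

/-- The defining relations of the Leavitt path algebra of the graph `(V, E, s, r)`:
(1) `v * w = δ_{v,w} v`; (2) `s(e) e = e = e r(e)` and `r(e) e* = e* = e* s(e)`;
(3) `e* f = δ_{e,f} r(e)`; (4) `v = ∑_{s(e) = v} e e*` for every non-sink `v`
(the sum makes sense whenever `v` emits finitely many edges, in particular for a
row-finite graph). -/
inductive LeavittRel : FreeAlgebra F (LGen V E) → FreeAlgebra F (LGen V E) → Prop
  | vertSelf (v : V) : LeavittRel (gvert F v * gvert F v) (gvert F v)
  | vertNe {v w : V} (h : v ≠ w) : LeavittRel (gvert F v * gvert F w) 0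
  | edgeSource (e : E) : LeavittRel (gvert F (s e) * gedge F e) (gedge F e)
  | edgeRange (e : E) : LeavittRel (gedge F e * gvert F (r e)) (gedge F e)
  | starRange (e : E) : LeavittRel (gvert F (r e) * gstar F e) (gstar F e)
  | starSource (e : E) : LeavittRel (gstar F e * gvert F (s e)) (gstar F e)
  | starEdgeSelf (e : E) : LeavittRel (gstar F e * gedge F e) (gvert F (r e))
  | starEdgeNe {e f : E} (h : e ≠ f) : LeavittRel (gstar F e * gedge F f) 0
  | ck (v : V) (h : {e : E | s e = v}.Finite) (hne : ∃ e, s e = v) :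
      LeavittRel (gvert F v) (∑ e ∈ h.toFinset, gedge F e * gstar F e)

/-- The Leavitt path algebra `L(Γ)` of the graph `Γ = (V, E, s, r)` over the field `F`,
presented as the quotient of the free algebra on the generators by the Leavitt relations. -/
noncomputable abbrev LeavittPathAlgebra := RingQuot (LeavittRel F s r)

/-- The image of a vertex in the Leavitt path algebra. -/
noncomputable def lvert (v : V) : LeavittPathAlgebra F s r :=
  RingQuot.mkAlgHom F (LeavittRel F s r) (gvert F v)

/-- The image of an edge in the Leavitt path algebra. -/
noncomputable def ledge (e : E) : LeavittPathAlgebra F s r :=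
  RingQuot.mkAlgHom F (LeavittRel F s r) (gedge F e)

/-- The image of a ghost edge `e*` in the Leavitt path algebra. -/
noncomputable def lstar (e : E) : LeavittPathAlgebra F s r :=
  RingQuot.mkAlgHom F (LeavittRel F s r) (gstar F e)

/-- The element of the Leavitt path algebra given by a path `p = e₁ ⋯ eₙ` (a list of edges). -/
noncomputable def lpath (p : List E) : LeavittPathAlgebra F s r := (p.map (ledge F s r)).prod

/-- The element `p* = eₙ* ⋯ e₁*` of the Leavitt path algebra given by a path `p = e₁ ⋯ eₙ`. -/
noncomputable def lpathStar (p : List E) : LeavittPathAlgebra F s r :=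
  (p.reverse.map (lstar F s r)).prod

/-- A list of edges is a path when the range of each edge is the source of the next. -/
def IsPath (s r : E → V) (p : List E) : Prop := List.Chain' (fun e f => r e = s f) p

/-- A nonempty path starts at the source of its first edge. -/
def StartsAt (s : E → V) (p : List E) (v : V) : Prop := ∃ e, p.head? = some e ∧ s e = v

/-- A nonempty path ends at the range of its last edge. -/
def EndsAt (r : E → V) (p : List E) (v : V) : Prop := ∃ e, p.getLast? = some e ∧ r e = v

/-- A (nonempty) closed path: it starts and ends at the same vertex. -/
def IsClosedPath (s r : E → V) (p : List E) : Prop := ∃ v, StartsAt s p v ∧ EndsAt r p v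

/-- A cycle: a closed path whose source vertices are pairwise distinct.  A cycle is
identified with the subgraph it spans, i.e. with its set of edges `{e | e ∈ p}`. -/
def IsCycle (s r : E → V) (p : List E) : Prop :=
  IsPath s r p ∧ IsClosedPath s r p ∧ (p.map s).Nodup

/-- The vertex set `V(C)` of a cycle (the sources of its edges). -/
def cycleVerts (s : E → V) (c : List E) : Set V := {v | ∃ e ∈ c, s e = v}

/-- `C ⟹ C'`: some (possibly empty) path starts at a vertex of `C` and ends at a
vertex of `C'`. -/
def CycleConnects (s r : E → V) (c c' : List E) : Prop :=
  ∃ v w, v ∈ cycleVerts s c ∧ w ∈ cycleVerts s c' ∧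
    (v = w ∨ ∃ p, p ≠ [] ∧ IsPath s r p ∧ StartsAt s p v ∧ EndsAt r p w)

/-- A chain of cycles `C₁ ⟹ C₂ ⟹ ⋯ ⟹ C_k`: pairwise distinct cycles, each connected
to the next; its length is the number of cycles. -/
def IsChainOfCycles (s r : E → V) (cs : List (List E)) : Prop :=
  (∀ c ∈ cs, IsCycle s r c) ∧ List.Chain' (CycleConnects s r) cs ∧
    List.Pairwise (fun c c' => {e | e ∈ c} ≠ {e | e ∈ c'}) cs

/-- A cycle has an exit if some edge starts at a vertex of the cycle but is not an
edge of the cycle. -/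
def HasExit (s : E → V) (c : List E) : Prop := ∃ e, s e ∈ cycleVerts s c ∧ e ∉ c

/-- A chain of cycles with an exit: the last cycle of the chain has an exit. -/
def ChainWithExit (s r : E → V) (cs : List (List E)) : Prop :=
  IsChainOfCycles s r cs ∧ ∃ c, cs.getLast? = some c ∧ HasExit s c

/-- Any two distinct cycles of the graph have no common vertex: two cycles sharing a
vertex coincide (have the same edge set). -/
def SeparatedCycles (s r : E → V) : Prop :=
  ∀ c c', IsCycle s r c → IsCycle s r c' →
    (cycleVerts s c ∩ cycleVerts s c').Nonempty → {e | e ∈ c} = {e | e ∈ c'}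

/-- `W + W² + ⋯ + Wⁿ` for a subspace `W` of an `F`-algebra. -/
noncomputable def powsSum {A : Type} [Semiring A] [Algebra F A]
    (W : Submodule F A) (n : ℕ) : Submodule F A :=
  ∑ i ∈ Finset.Icc 1 n, W ^ i


/-!
Write `v` for the common vertex and `P`, `Q` for the two cycles, read as lists of edges.
`L(Γ)` acts on the vector space with basis the infinite paths of `Γ`: an edge `e` prepends
itself, `e*` deletes a leading `e`, and a vertex projects onto the paths starting there.
A word `u(p, q)` therefore sends the basis vector `x₀ = Q P P P ⋯` to the basis vector
`u(P, Q) x₀`. As a cycle visits `v` only at its start, the visits of a concatenation of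
cycles to `v` are exactly the block boundaries, so `u` can be read off `u(P, Q) x₀`.
Distinct words give distinct basis vectors, hence linearly independent elements.
-/

open scoped Classical

def IsInfPath (g : Stream' E) : Prop := ∀ n, r (g.get n) = s (g.get (n + 1))

def IsClosedPathAt (v : V) (X : List E) : Prop := IsPath s r X ∧ StartsAt s X v ∧ EndsAt r X v

section Paths

variable {s r} {v : V} {X : List E}

lemma StartsAt.ne_nil (hX : StartsAt s X v) : X ≠ [] := by
  rintro rfl
  simp [StartsAt] at hX

lemma StartsAt.unique {w : V} (hv : StartsAt s X v) (hw : StartsAt s X w) : v = w := by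
  obtain ⟨e, he, rfl⟩ := hv
  obtain ⟨e', he', rfl⟩ := hw
  rw [he, Option.some_inj] at he'
  rw [he']

lemma IsCycle.isClosedPathAt (hX : IsCycle s r X) (hv : StartsAt s X v) :
    IsClosedPathAt s r v X := by
  obtain ⟨hpath, ⟨w, hw, hend⟩, -⟩ := hX
  exact ⟨hpath, hv, hv.unique hw ▸ hend⟩

lemma StartsAt.source_head_append_stream (hX : StartsAt s X v) (t : Stream' E) :
    s (X ++ₛ t).head = v := by
  obtain ⟨e, he, rfl⟩ := hX
  obtain ⟨X', rfl⟩ := List.head?_eq_some_iff.mp he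
  rfl

lemma IsInfPath.cons {e : E} {g : Stream' E} (he : r e = s g.head) (hg : IsInfPath s r g) :
    IsInfPath s r (Stream'.cons e g)
  | 0 => he
  | n + 1 => hg n

lemma IsInfPath.tail {g : Stream' E} (hg : IsInfPath s r g) : IsInfPath s r g.tail :=
  fun n => hg (n + 1)

lemma IsPath.range_get_append_stream_of_lt {t : Stream' E} (hX : IsPath s r X)
    (hend : EndsAt r X (s t.head)) {n : ℕ} (hn : n < X.length) :
    r ((X ++ₛ t).get n) = s ((X ++ₛ t).get (n + 1)) := by
  rw [Stream'.get_append_left _ _ _ hn]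
  rcases Nat.lt_or_ge (n + 1) X.length with hn' | hn'
  · rw [Stream'.get_append_left _ _ _ hn']
    exact List.isChain_iff_getElem.mp hX n hn'
  · obtain ⟨e, he, hre⟩ := hend
    have hlast : X[n] = e := by
      obtain ⟨_, he⟩ := List.getElem?_eq_some_iff.mp (List.getLast?_eq_getElem? ▸ he)
      simpa [show X.length - 1 = n by omega] using he
    rw [show n + 1 = X.length by omega, Stream'.get_append_length, hlast, hre]

lemma IsInfPath.append_stream {t : Stream' E} (hX : IsPath s r X)
    (hend : EndsAt r X (s t.head)) (ht : IsInfPath s r t) : IsInfPath s r (X ++ₛ t) := by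
  intro n
  rcases Nat.lt_or_ge n X.length with hn | hn
  · exact hX.range_get_append_stream_of_lt hend hn
  · obtain ⟨k, rfl⟩ := Nat.exists_eq_add_of_le hn
    simpa only [Stream'.get_append_right, add_assoc] using ht k

lemma IsClosedPathAt.isInfPath_append_stream (hX : IsClosedPathAt s r v X) {t : Stream' E}
    (ht : IsInfPath s r t) (htv : s t.head = v) : IsInfPath s r (X ++ₛ t) :=
  ht.append_stream hX.1 (htv ▸ hX.2.2)

lemma IsClosedPathAt.isInfPath_cycle (hX : IsClosedPathAt s r v X) (hne : X ≠ []) :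
    IsInfPath s r (Stream'.cycle X hne) := by
  obtain ⟨hpath, hstart, hend⟩ := hX
  have hhead : s (Stream'.cycle X hne).head = v := by
    rw [Stream'.cycle_eq]
    exact hstart.source_head_append_stream _
  have hlen := List.length_pos_iff.mpr hne
  intro n
  induction n using Nat.strong_induction_on with
  | _ n ih =>
    rw [Stream'.cycle_eq]
    rcases Nat.lt_or_ge n X.length with hn | hn
    · exact hpath.range_get_append_stream_of_lt (hhead ▸ hend) hn
    · obtain ⟨k, rfl⟩ := Nat.exists_eq_add_of_le hn
      simpa only [Stream'.get_append_right, add_assoc] using ih k (by omega)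

end Paths

abbrev InfPath : Type := {g : Stream' E // IsInfPath s r g}

namespace InfPath

variable {s r}

def cons (e : E) (g : InfPath s r) (h : r e = s g.1.head) : InfPath s r :=
  ⟨Stream'.cons e g.1, g.2.cons h⟩

def tail (g : InfPath s r) : InfPath s r := ⟨g.1.tail, g.2.tail⟩

@[simp] lemma cons_head_tail (g : InfPath s r) : cons g.1.head g.tail (g.2 0) = g :=
  Subtype.ext (Stream'.eta g.1)

@[simp] lemma tail_cons (e : E) (g : InfPath s r) (h : r e = s g.1.head) :
    (cons e g h).tail = g :=
  Subtype.ext (Stream'.tail_cons e g.1)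

@[simp] lemma head_cons (e : E) (g : InfPath s r) (h : r e = s g.1.head) :
    (cons e g h).1.head = e :=
  rfl

lemma source_head_tail (g : InfPath s r) : s g.tail.1.head = r g.1.head :=
  (g.2 0).symm

end InfPath

section InfPathModule

open Finsupp

noncomputable def vertOp (v : V) : Module.End F (InfPath s r →₀ F) :=
  linearCombination F fun g => if s g.1.head = v then single g 1 else 0

noncomputable def edgeOp (e : E) : Module.End F (InfPath s r →₀ F) :=
  linearCombination F fun g => if h : r e = s g.1.head then single (g.cons e h) 1 else 0

noncomputable def starOp (e : E) : Module.End F (InfPath s r →₀ F) :=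
  linearCombination F fun g => if g.1.head = e then single g.tail 1 else 0

noncomputable def infPathRepFree :
    FreeAlgebra F (LGen V E) →ₐ[F] Module.End F (InfPath s r →₀ F) :=
  FreeAlgebra.lift F fun
    | .vert v => vertOp F s r v
    | .edge e => edgeOp F s r e
    | .star e => starOp F s r e

variable {F s r}

@[simp] lemma vertOp_single (v : V) (g : InfPath s r) :
    vertOp F s r v (single g 1) = if s g.1.head = v then single g 1 else 0 := by
  simp [vertOp]

@[simp] lemma edgeOp_single (e : E) (g : InfPath s r) :
    edgeOp F s r e (single g 1) =
      if h : r e = s g.1.head then single (g.cons e h) 1 else 0 := by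
  simp [edgeOp]

@[simp] lemma starOp_single (e : E) (g : InfPath s r) :
    starOp F s r e (single g 1) = if g.1.head = e then single g.tail 1 else 0 := by
  simp [starOp]

@[simp] lemma infPathRepFree_gvert (v : V) : infPathRepFree F s r (gvert F v) = vertOp F s r v :=
  FreeAlgebra.lift_ι_apply _ _

@[simp] lemma infPathRepFree_gedge (e : E) : infPathRepFree F s r (gedge F e) = edgeOp F s r e :=
  FreeAlgebra.lift_ι_apply _ _

@[simp] lemma infPathRepFree_gstar (e : E) : infPathRepFree F s r (gstar F e) = starOp F s r e :=
  FreeAlgebra.lift_ι_apply _ _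

lemma infPathRepFree_rel {a b : FreeAlgebra F (LGen V E)} (h : LeavittRel F s r a b) :
    infPathRepFree F s r a = infPathRepFree F s r b := by
  refine Finsupp.basisSingleOne.ext fun g => ?_
  simp only [coe_basisSingleOne]
  induction h with
  | vertSelf v => by_cases hv : s g.1.head = v <;> simp [hv]
  | @vertNe v w hvw => by_cases hw : s g.1.head = w <;> simp [hw, hvw.symm]
  | edgeSource e => by_cases he : r e = s g.1.head <;> simp [he]
  | edgeRange e => by_cases he : r e = s g.1.head <;> simp [he, eq_comm]
  | starRange e => by_cases he : g.1.head = e <;> simp [he, InfPath.source_head_tail]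
  | starSource e =>
    by_cases he : g.1.head = e <;> by_cases hs : s g.1.head = s e <;> simp [he, hs]
  | starEdgeSelf e => by_cases he : r e = s g.1.head <;> simp [he, eq_comm]
  | @starEdgeNe e f hef => by_cases hf : r f = s g.1.head <;> simp [hf, hef.symm]
  | ck v hfin hne =>
    simp only [map_sum, map_mul, LinearMap.sum_apply, Module.End.mul_apply, infPathRepFree_gvert,
      infPathRepFree_gedge, infPathRepFree_gstar, starOp_single, vertOp_single]
    by_cases hv : s g.1.head = v
    · rw [if_pos hv, Finset.sum_eq_single_of_mem g.1.head (by simpa using hv)]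
      · simp [InfPath.source_head_tail]
      · intro e _ hne
        simp [Ne.symm hne]
    · rw [if_neg hv, eq_comm]
      refine Finset.sum_eq_zero fun e he => ?_
      have : g.1.head ≠ e := by rintro rfl; exact hv (by simpa using he)
      simp [this]

variable (F s r)

noncomputable def infPathRep :
    LeavittPathAlgebra F s r →ₐ[F] Module.End F (InfPath s r →₀ F) :=
  RingQuot.liftAlgHom F ⟨infPathRepFree F s r, fun _ _ => infPathRepFree_rel⟩

variable {F s r}

lemma infPathRep_lpath_single (X : List E) (g : InfPath s r) (h : IsInfPath s r (X ++ₛ g.1)) :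
    infPathRep F s r (lpath F s r X) (single g 1) = single ⟨X ++ₛ g.1, h⟩ 1 := by
  induction X with
  | nil => simp [lpath]
  | cons e X ih =>
    rw [lpath, List.map_cons, List.prod_cons, map_mul, Module.End.mul_apply, ← lpath, ih h.tail]
    simp only [infPathRep, ledge, RingQuot.liftAlgHom_mkAlgHom_apply, infPathRepFree_gedge]
    exact (edgeOp_single e _).trans (dif_pos (h 0))

end InfPathModule

/-- Concatenations of blocks at `v` are uniquely decodable: they visit `v` exactly at the
block boundaries. -/
def IsBlock (v : V) (X : List E) : Prop := StartsAt s X v ∧ (X.map s).Nodup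

def wordStream (P Q : List E) (u : List Bool) (t : Stream' E) : Stream' E :=
  u.foldr (fun b t => (if b then P else Q) ++ₛ t) t

section Words

variable {F s r} {v : V} {P Q X Y : List E}

@[simp] lemma wordStream_nil (t : Stream' E) : wordStream P Q [] t = t := rfl

@[simp] lemma wordStream_cons (b : Bool) (u : List Bool) (t : Stream' E) :
    wordStream P Q (b :: u) t = (if b then P else Q) ++ₛ wordStream P Q u t := rfl

lemma source_head_wordStream (hP : StartsAt s P v) (hQ : StartsAt s Q v) {t : Stream' E}
    (ht : s t.head = v) : ∀ u, s (wordStream P Q u t).head = v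
  | [] => ht
  | true :: _ => hP.source_head_append_stream _
  | false :: _ => hQ.source_head_append_stream _

lemma isInfPath_wordStream (hP : IsClosedPathAt s r v P) (hQ : IsClosedPathAt s r v Q)
    {t : Stream' E} (ht : IsInfPath s r t) (htv : s t.head = v) :
    ∀ u, IsInfPath s r (wordStream P Q u t)
  | [] => ht
  | b :: u => by
    have hu := isInfPath_wordStream hP hQ ht htv u
    have huv := source_head_wordStream hP.2.1 hQ.2.1 htv u
    cases b
    · exact hQ.isInfPath_append_stream hu huv
    · exact hP.isInfPath_append_stream hu huv

lemma infPathRep_wordProd_single (hP : IsClosedPathAt s r v P) (hQ : IsClosedPathAt s r v Q)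
    (g : InfPath s r) (hg : s g.1.head = v) (u : List Bool) :
    infPathRep F s r (u.map fun b => if b then lpath F s r P else lpath F s r Q).prod
        (Finsupp.single g 1) =
      Finsupp.single ⟨wordStream P Q u g.1, isInfPath_wordStream hP hQ g.2 hg u⟩ 1 := by
  induction u with
  | nil => simp
  | cons b u ih =>
    rw [List.map_cons, List.prod_cons, map_mul, Module.End.mul_apply, ih]
    cases b <;> exact infPathRep_lpath_single _ _ _

lemma IsBlock.source_getElem_ne (hX : IsBlock s v X) {n : ℕ} (hn0 : 0 < n)
    (hn : n < X.length) : s X[n] ≠ v := by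
  obtain ⟨⟨e, he, rfl⟩, hnd⟩ := hX
  obtain ⟨X', rfl⟩ := List.head?_eq_some_iff.mp he
  obtain ⟨m, rfl⟩ := Nat.exists_eq_succ_of_ne_zero hn0.ne'
  rw [List.map_cons, List.nodup_cons] at hnd
  exact fun h => hnd.1 (List.mem_map.mpr ⟨_, List.getElem_mem (Nat.succ_lt_succ_iff.mp hn), h⟩)

lemma IsBlock.not_length_lt (hY : IsBlock s v Y) (hX : X ≠ []) {t t' : Stream' E}
    (ht : s t.head = v) (h : X ++ₛ t = Y ++ₛ t') : ¬X.length < Y.length := fun hlt =>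
  hY.source_getElem_ne (List.length_pos_iff.mpr hX) hlt <| by
    rw [← Stream'.get_append_left _ _ t' hlt, ← h, Stream'.get_append_length]
    exact ht

lemma IsBlock.append_stream_inj (hX : IsBlock s v X) (hY : IsBlock s v Y) {t t' : Stream' E}
    (ht : s t.head = v) (ht' : s t'.head = v) (h : X ++ₛ t = Y ++ₛ t') : X = Y ∧ t = t' := by
  have hlen : X.length = Y.length :=
    le_antisymm (not_lt.mp (hX.not_length_lt hY.1.ne_nil ht' h.symm))
      (not_lt.mp (hY.not_length_lt hX.1.ne_nil ht h))
  obtain rfl := Stream'.append_left_injective _ _ _ _ h hlen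
  exact ⟨rfl, Stream'.append_right_injective _ _ _ h⟩

lemma IsBlock.source_head_cycle (hP : IsBlock s v P) :
    s (Stream'.cycle P hP.1.ne_nil).head = v := by
  rw [Stream'.cycle_eq]
  exact hP.1.source_head_append_stream _

lemma wordStream_ne_cycle (hP : IsBlock s v P) (hQ : IsBlock s v Q) (hPQ : P ≠ Q)
    (u : List Bool) :
    wordStream P Q u (Q ++ₛ Stream'.cycle P hP.1.ne_nil) ≠ Stream'.cycle P hP.1.ne_nil := by
  have hT := hQ.1.source_head_append_stream (Stream'.cycle P hP.1.ne_nil)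
  induction u with
  | nil =>
    exact fun h => hPQ (hP.append_stream_inj hQ hP.source_head_cycle hP.source_head_cycle
      ((Stream'.cycle_eq _ _).symm.trans h.symm)).1
  | cons b u ih =>
    intro h
    have hb : IsBlock s v (if b then P else Q) := by cases b <;> assumption
    exact ih (hb.append_stream_inj hP (source_head_wordStream hP.1 hQ.1 hT u)
      hP.source_head_cycle (h.trans (Stream'.cycle_eq _ _))).2

lemma eq_nil_of_wordStream_eq (hP : IsBlock s v P) (hQ : IsBlock s v Q) (hPQ : P ≠ Q)
    {u : List Bool} (h : wordStream P Q u (Q ++ₛ Stream'.cycle P hP.1.ne_nil) =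
      Q ++ₛ Stream'.cycle P hP.1.ne_nil) :
    u = [] := by
  have hT := hQ.1.source_head_append_stream (Stream'.cycle P hP.1.ne_nil)
  cases u with
  | nil => rfl
  | cons b u =>
    have hb : IsBlock s v (if b then P else Q) := by cases b <;> assumption
    exact absurd (hb.append_stream_inj hQ (source_head_wordStream hP.1 hQ.1 hT u)
      hP.source_head_cycle h).2 (wordStream_ne_cycle hP hQ hPQ u)

/-- The tail `Q P P P ⋯` is not `P P P ⋯`, which would identify the words `u` and `u P`. -/
theorem wordStream_injective (hP : IsBlock s v P) (hQ : IsBlock s v Q) (hPQ : P ≠ Q) :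
    Function.Injective fun u => wordStream P Q u (Q ++ₛ Stream'.cycle P hP.1.ne_nil) := by
  have hT := hQ.1.source_head_append_stream (Stream'.cycle P hP.1.ne_nil)
  have hb : ∀ b : Bool, IsBlock s v (if b then P else Q) := fun b => by cases b <;> assumption
  intro u u' h
  induction u generalizing u' with
  | nil => exact (eq_nil_of_wordStream_eq hP hQ hPQ h.symm).symm
  | cons b u ih =>
    cases u' with
    | nil => exact eq_nil_of_wordStream_eq hP hQ hPQ h
    | cons b' u' =>
      obtain ⟨hbb', huu'⟩ := (hb b).append_stream_inj (hb b')
        (source_head_wordStream hP.1 hQ.1 hT u) (source_head_wordStream hP.1 hQ.1 hT u') h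
      have : b = b' := by cases b <;> cases b' <;> simp_all
      rw [this, ih huu']

end Words

/-- Lemma 1 of the paper.  If `C₁` and `C₂` are distinct cycles of `Γ`
with a common starting vertex, and `p`, `q` are the corresponding closed paths
traversing them once, then `p` and `q` generate a free (non-unital) subalgebra of
`L(Γ)`: the evaluations `u(p, q)` over all nonempty words `u` in two letters are
linearly independent over `F`. -/
theorem free_subalgebra_of_two_cycles
    (es₁ es₂ : List E) (h₁ : IsCycle s r es₁) (h₂ : IsCycle s r es₂)
    (hdistinct : {e | e ∈ es₁} ≠ {e | e ∈ es₂})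
    (hcommon : ∃ e₁ e₂, es₁.head? = some e₁ ∧ es₂.head? = some e₂ ∧ s e₁ = s e₂) :
    LinearIndependent F
      (fun u : {w : List Bool // w ≠ []} =>
        (u.val.map (fun b => if b then lpath F s r es₁ else lpath F s r es₂)).prod) := by
  obtain ⟨e₁, e₂, he₁, he₂, hv⟩ := hcommon
  have hs₁ : StartsAt s es₁ (s e₁) := ⟨e₁, he₁, rfl⟩
  have hs₂ : StartsAt s es₂ (s e₁) := ⟨e₂, he₂, hv.symm⟩
  have hb₁ : IsBlock s (s e₁) es₁ := ⟨hs₁, h₁.2.2⟩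
  have hb₂ : IsBlock s (s e₁) es₂ := ⟨hs₂, h₂.2.2⟩
  have hc₁ := h₁.isClosedPathAt hs₁
  have hc₂ := h₂.isClosedPathAt hs₂
  let x₀ : InfPath s r := ⟨es₂ ++ₛ Stream'.cycle es₁ hs₁.ne_nil,
    hc₂.isInfPath_append_stream (hc₁.isInfPath_cycle hs₁.ne_nil) hb₁.source_head_cycle⟩
  have hx₀ : s x₀.1.head = s e₁ := hs₂.source_head_append_stream _
  have hinj := wordStream_injective hb₁ hb₂ fun h => hdistinct (h ▸ rfl)
  refine LinearIndependent.of_comp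
    ((LinearMap.applyₗ (Finsupp.single x₀ 1)).comp (infPathRep F s r).toLinearMap) ?_
  convert (Finsupp.linearIndependent_single_one F (InfPath s r)).comp
    (fun u : {w : List Bool // w ≠ []} => ⟨_, isInfPath_wordStream hc₁ hc₂ x₀.2 hx₀ u.1⟩)
    (fun u u' h => Subtype.ext (hinj (congrArg Subtype.val h))) using 1
  funext u
  exact infPathRep_wordProd_single hc₁ hc₂ x₀ hx₀ u.1

end LeavittSetup
end

section
/- Let Γ be a directed graph in which any two distinct cycles have no common vertex. If C′ and C″ are cycles of Γ such that there is a path starting at a vertex of C′ and ending at a vertex of C″, and also a path starting at a vertex of C″ and ending at a vertex of C′, then C′ = C″. -/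
open scoped BigOperators

section LeavittSetup

variable {V E : Type}

variable (F : Type) [Field F]

variable (s r : E → V)

/-!
Under separation, the vertex set of a cycle `C` is closed under round trips: a vertex `w` on a
walk from `V(C)` back to `V(C)` lies in `V(C)`. Walking step by step, let `e` be the next edge,
leaving a vertex of `C`; its range reaches back to `V(C)` and then, along `C`, to `s(e)`.
Loop erasure turns this into a cycle through `e`, which meets `C` at `s(e)` and hence equals
`C`; so `e` is an edge of `C` and `r(e) ∈ V(C)`. If `C' ⟹ C''` ends at `w ∈ V(C'')` and
`C'' ⟹ C'`, then going around `C''` the vertex `w` lies on such a round trip from `V(C')`,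
so `C'` and `C''` share `w`.
-/

section Walks

variable {s r}

abbrev Reaches (s r : E → V) : V → V → Prop :=
  Relation.ReflTransGen fun a b => ∃ e, s e = a ∧ r e = b

def IsWalk (s r : E → V) : V → List E → V → Prop
  | a, [], b => a = b
  | a, e :: p, b => s e = a ∧ IsWalk s r (r e) p b

theorem isWalk_append {a b : V} {p q : List E} :
    IsWalk s r a (p ++ q) b ↔ ∃ m, IsWalk s r a p m ∧ IsWalk s r m q b := by
  induction p generalizing a with
  | nil => simp [IsWalk]
  | cons e p ih => simp only [List.cons_append, IsWalk, ih, and_assoc, exists_and_left]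

theorem isPath_iff_isChain {p : List E} :
    IsPath s r p ↔ p.IsChain fun e f => r e = s f := Iff.rfl

theorem isWalk_iff_isPath {a b : V} {p : List E} (hp : p ≠ []) :
    IsWalk s r a p b ↔ IsPath s r p ∧ StartsAt s p a ∧ EndsAt r p b := by
  induction p generalizing a with
  | nil => contradiction
  | cons e p ih =>
    cases p with
    | nil => simp [IsWalk, isPath_iff_isChain, StartsAt, EndsAt]
    | cons f p =>
      rw [IsWalk, ih (List.cons_ne_nil f p)]
      simp only [isPath_iff_isChain, StartsAt, EndsAt, List.isChain_cons_cons, List.head?_cons,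
        Option.some.injEq, List.getLast?_cons_cons]
      grind

theorem IsWalk.reaches {a b : V} {p : List E} (h : IsWalk s r a p b) : Reaches s r a b := by
  induction p generalizing a with
  | nil => exact h ▸ .refl
  | cons e p ih => exact .head ⟨e, h.1, rfl⟩ (ih h.2)

theorem IsWalk.reaches_source_of_mem {a b : V} {p : List E} (h : IsWalk s r a p b) {e : E}
    (he : e ∈ p) : Reaches s r a (s e) ∧ Reaches s r (s e) b := by
  obtain ⟨p₁, p₂, rfl⟩ := List.append_of_mem he
  obtain ⟨m, h₁, h₂⟩ := isWalk_append.1 h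
  obtain rfl : s e = m := h₂.1
  exact ⟨h₁.reaches, h₂.reaches⟩

theorem IsWalk.range_mem {a b : V} {p : List E} (h : IsWalk s r a p b) {e : E} (he : e ∈ p) :
    r e = b ∨ r e ∈ cycleVerts s p := by
  obtain ⟨p₁, p₂, rfl⟩ := List.append_of_mem he
  obtain ⟨m, -, -, h₂⟩ := isWalk_append.1 h
  cases p₂ with
  | nil => exact .inl h₂
  | cons f p₂ => exact .inr ⟨f, by simp, h₂.1⟩

theorem Reaches.exists_isWalk_nodup {a b : V} (h : Reaches s r a b) :
    ∃ p, IsWalk s r a p b ∧ (p.map s).Nodup ∧ b ∉ p.map s := by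
  induction h using Relation.ReflTransGen.head_induction_on with
  | refl => exact ⟨[], rfl, List.nodup_nil, List.not_mem_nil⟩
  | head hac _ ih =>
    obtain ⟨f, rfl, rfl⟩ := hac
    obtain ⟨p, hp, hnd, hb⟩ := ih
    by_cases hfb : s f = b
    · exact ⟨[], hfb, List.nodup_nil, List.not_mem_nil⟩
    by_cases hf : s f ∈ p.map s
    · -- the walk returns to `s f`: erase the loop by keeping only the part after the return
      obtain ⟨g, hg, hgf⟩ := List.mem_map.1 hf
      obtain ⟨p₁, p₂, rfl⟩ := List.append_of_mem hg
      obtain ⟨m, -, hm⟩ := isWalk_append.1 hp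
      have hsuffix : List.Sublist ((g :: p₂).map s) ((p₁ ++ g :: p₂).map s) :=
        (List.sublist_append_right p₁ _).map s
      exact ⟨g :: p₂, ⟨hgf, hm.2⟩, hnd.sublist hsuffix, fun h => hb (hsuffix.subset h)⟩
    · exact ⟨f :: p, ⟨rfl, hp⟩, List.nodup_cons.2 ⟨hf, hnd⟩, by simp [hb, Ne.symm hfb]⟩

theorem IsCycle.exists_isWalk {c : List E} (hc : IsCycle s r c) :
    ∃ u ∈ cycleVerts s c, IsWalk s r u c u := by
  obtain ⟨hpath, ⟨u, hstart, hend⟩, -⟩ := hc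
  obtain ⟨e, he, hse⟩ := hstart
  have hne : c ≠ [] := by rintro rfl; cases he
  exact ⟨u, ⟨e, List.mem_of_mem_head? he, hse⟩,
    (isWalk_iff_isPath hne).2 ⟨hpath, ⟨e, he, hse⟩, hend⟩⟩

theorem IsCycle.reaches {c : List E} (hc : IsCycle s r c) {x y : V}
    (hx : x ∈ cycleVerts s c) (hy : y ∈ cycleVerts s c) : Reaches s r x y := by
  obtain ⟨u, -, hw⟩ := hc.exists_isWalk
  obtain ⟨f, hf, rfl⟩ := hx
  obtain ⟨g, hg, rfl⟩ := hy
  exact (hw.reaches_source_of_mem hf).2.trans (hw.reaches_source_of_mem hg).1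

theorem IsCycle.range_mem {c : List E} (hc : IsCycle s r c) {e : E} (he : e ∈ c) :
    r e ∈ cycleVerts s c := by
  obtain ⟨u, hu, hw⟩ := hc.exists_isWalk
  exact (hw.range_mem he).elim (· ▸ hu) id

theorem exists_isCycle_mem_of_reaches {e : E} (h : Reaches s r (r e) (s e)) :
    ∃ c, IsCycle s r c ∧ e ∈ c := by
  obtain ⟨p, hp, hnd, hnot⟩ := h.exists_isWalk_nodup
  have hw : IsWalk s r (s e) (e :: p) (s e) := ⟨rfl, hp⟩
  obtain ⟨hpath, hstart, hend⟩ := (isWalk_iff_isPath (List.cons_ne_nil e p)).1 hw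
  exact ⟨e :: p, ⟨hpath, ⟨s e, hstart, hend⟩, List.nodup_cons.2 ⟨hnot, hnd⟩⟩,
    List.mem_cons_self⟩

theorem CycleConnects.exists_reaches {c c' : List E} (h : CycleConnects s r c c') :
    ∃ v ∈ cycleVerts s c, ∃ w ∈ cycleVerts s c', Reaches s r v w := by
  obtain ⟨v, w, hv, hw, rfl | ⟨p, hne, hp, hs, he⟩⟩ := h
  · exact ⟨v, hv, v, hw, .refl⟩
  · exact ⟨v, hv, w, hw, ((isWalk_iff_isPath hne).2 ⟨hp, hs, he⟩).reaches⟩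

theorem SeparatedCycles.mem_cycleVerts_of_reaches (hsep : SeparatedCycles s r) {c : List E}
    (hc : IsCycle s r c) {u w x : V} (hu : u ∈ cycleVerts s c) (huw : Reaches s r u w)
    (hwx : Reaches s r w x) (hx : x ∈ cycleVerts s c) : w ∈ cycleVerts s c := by
  induction huw with
  | refl => exact hu
  | tail _ hstep ih =>
    obtain ⟨e, rfl, rfl⟩ := hstep
    have hse : s e ∈ cycleVerts s c := ih (.head ⟨e, rfl, rfl⟩ hwx)
    obtain ⟨d, hd, hed⟩ := exists_isCycle_mem_of_reaches (hwx.trans (hc.reaches hx hse))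
    have hdc := hsep d c hd hc ⟨s e, ⟨e, hed, rfl⟩, hse⟩
    exact hc.range_mem (show e ∈ {f | f ∈ c} from hdc ▸ hed)

end Walks

/-- Lemma 2 of the paper.  Suppose any two distinct cycles of `Γ`
have no common vertex.  If `C'` and `C''` are cycles with `C' ⟹ C''` and
`C'' ⟹ C'`, then `C' = C''` (they have the same edges). -/
theorem cycles_connected_both_ways_eq
    (hsep : SeparatedCycles s r) (c c' : List E)
    (hc : IsCycle s r c) (hc' : IsCycle s r c')
    (h₁ : CycleConnects s r c c') (h₂ : CycleConnects s r c' c) :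
    {e | e ∈ c} = {e | e ∈ c'} := by
  obtain ⟨v, hv, w, hw, hvw⟩ := h₁.exists_reaches
  obtain ⟨v', hv', w', hw', hvw'⟩ := h₂.exists_reaches
  have hwc : w ∈ cycleVerts s c :=
    hsep.mem_cycleVerts_of_reaches hc hv hvw ((hc'.reaches hw hv').trans hvw') hw'
  exact hsep c c' hc hc' ⟨w, hwc, hw⟩

end LeavittSetup
end

section
/- Let Γ be a directed graph, let C₁ = (v₁,…,v_m; e₁,…,e_m) and C₂ = (w₁,…,w_k; f₁,…,f_k) be distinct cycles with common vertex v₁ = w₁, and set p = e₁…e_m, q = f₁…f_k, both closed paths based at v₁. Then the monoid homomorphism from the free monoid on two generators x, y to the monoid of closed paths based at v₁ (under concatenation) sending x ↦ p and y ↦ q is injective: if u₁ and u₂ are distinct words in x, y then the paths u₁(p,q) and u₂(p,q) are distinct. -/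
open scoped BigOperators

section LeavittSetup

variable {V E : Type}

variable (F : Type) [Field F]

variable (s r : E → V)

/-! A cycle `c` cannot be a proper prefix of another cycle `d`: the edge of `d` following `c`
would start at the base vertex of `c`, which `d` has already visited. Hence the two cycles
form a prefix code, and concatenations of words in a prefix code decode uniquely, letter by
letter from the left. -/

theorem List.flatten_map_injective_of_prefixFree {α β : Type*} {f : α → List β}
    (hne : ∀ a, f a ≠ []) (hprefix : ∀ a b, f a <+: f b → a = b) :
    Function.Injective (fun u : List α => (u.map f).flatten) := by
  intro u₁ u₂ h
  induction u₁ generalizing u₂ with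
  | nil =>
    cases u₂ with
    | nil => rfl
    | cons b t => exact absurd (List.append_eq_nil_iff.mp h.symm).1 (hne b)
  | cons a t₁ ih =>
    cases u₂ with
    | nil => exact absurd (List.append_eq_nil_iff.mp h).1 (hne a)
    | cons b t₂ =>
      simp only [List.map_cons, List.flatten_cons] at h
      have hab : a = b := by
        rcases List.prefix_or_prefix_of_prefix (h ▸ List.prefix_append _ _)
            (List.prefix_append (f b) _) with hp | hp
        · exact hprefix a b hp
        · exact (hprefix b a hp).symm
      subst hab
      rw [ih (List.append_cancel_left h)]

variable {s r} in
theorem IsCycle.ne_nil {c : List E} (h : IsCycle s r c) : c ≠ [] := by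
  rintro rfl
  obtain ⟨-, ⟨_, ⟨_, he, -⟩, -⟩, -⟩ := h
  simp at he

variable {s r} in
theorem IsCycle.eq_of_prefix {c d : List E} (hc : IsCycle s r c) (hd : IsCycle s r d)
    (hcd : c <+: d) : c = d := by
  obtain ⟨t, rfl⟩ := hcd
  obtain ⟨-, ⟨v, ⟨first, hfirst, hsfirst⟩, ⟨last, hlast, hrlast⟩⟩, -⟩ := hc
  obtain ⟨hpath, -, hnodup⟩ := hd
  cases t with
  | nil => exact (List.append_nil c).symm
  | cons next t =>
    have hsnext : s next = v :=
      hrlast ▸ ((List.isChain_append.1 hpath).2.2 last hlast next rfl).symm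
    rw [List.map_append, List.nodup_append] at hnodup
    exact absurd (hsfirst.trans hsnext.symm) (hnodup.2.2 _
      (List.mem_map_of_mem (List.mem_of_mem_head? hfirst)) _ (by simp))

theorem word_substitution_injective
    (es₁ es₂ : List E) (h₁ : IsCycle s r es₁) (h₂ : IsCycle s r es₂)
    (hdistinct : {e | e ∈ es₁} ≠ {e | e ∈ es₂}) :
    Function.Injective
      (fun u : List Bool => (u.map (fun b => if b then es₁ else es₂)).flatten) := by
  have hne : es₁ ≠ es₂ := fun h => hdistinct (by rw [h])
  refine List.flatten_map_injective_of_prefixFree (fun b => ?_) (fun a b hab => ?_)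
  · cases b
    exacts [h₂.ne_nil, h₁.ne_nil]
  · cases a <;> cases b <;>
      simp only [Bool.false_eq_true, Bool.true_eq_false, if_true, if_false] at hab ⊢
    · exact hne (h₂.eq_of_prefix h₁ hab).symm
    · exact hne (h₁.eq_of_prefix h₂ hab)

end LeavittSetup
end

section
/- Let Γ be a directed graph in which any two distinct cycles have no common vertex, and let C′, C″ be cycles of Γ. Suppose there exists a closed path that visits a vertex of C′ and a vertex of C″, and let t = e₁…eₙ be such a closed path of minimal length. Then the source vertices s(e₁),…,s(eₙ) are pairwise distinct, i.e., t is a cycle. -/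
open scoped BigOperators

section LeavittSetup

variable {V E : Type}

variable (F : Type) [Field F]

variable (s r : E → V)

/-! If the sources of `t` repeat, take a repetition `s x = s y` with no repetition in between:
`t = A ++ x :: D ++ y :: B`, where `x :: D` is a cycle and `A ++ y :: B` is a strictly shorter
closed path.  A cycle meeting `x :: D` has the same edges, so it contains `x`, and
`s x = s y` lies on the shortened path.  Hence the shortened path still visits `C'` and
`C''`, contradicting minimality. -/

theorem List.exists_split_repeat_of_not_nodup_map {α β : Type*} (f : α → β) {l : List α}
    (h : ¬(l.map f).Nodup) :
    ∃ A D B x y, l = A ++ x :: D ++ y :: B ∧ f x = f y ∧ ((x :: D).map f).Nodup := by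
  induction l using List.reverseRecOn with
  | nil => simp at h
  | append_singleton l e ih =>
    by_cases hl : (l.map f).Nodup
    · have hfe : f e ∈ l.map f := by
        by_contra hfe
        exact h (by simpa [List.nodup_append, hl] using hfe)
      obtain ⟨x, hx, hxe⟩ := List.mem_map.mp hfe
      obtain ⟨A, D, rfl⟩ := List.append_of_mem hx
      refine ⟨A, D, [], x, e, by simp, hxe, ?_⟩
      exact hl.sublist (by simp)
    · obtain ⟨A, D, B, x, y, rfl, hxy, hD⟩ := ih hl
      exact ⟨A, D, B ++ [e], x, y, by simp, hxy, hD⟩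

section DetourRemoval

variable {s r}

theorem IsPath.isCycle_of_nodup_loop {A D B : List E} {x y : E}
    (hp : IsPath s r (A ++ x :: D ++ y :: B)) (hxy : s x = s y)
    (hD : ((x :: D).map s).Nodup) : IsCycle s r (x :: D) := by
  have hloop : IsPath s r (x :: D ++ y :: B) := hp.suffix ⟨A, by simp⟩
  have hend : r ((x :: D).getLast (List.cons_ne_nil x D)) = s y :=
    hloop.rel_getLast_head_of_append (List.cons_ne_nil x D) (List.cons_ne_nil y B)
  exact ⟨hloop.left_of_append,
    ⟨s x, ⟨x, rfl, rfl⟩, ⟨_, List.getLast?_eq_some_getLast _, hend.trans hxy.symm⟩⟩, hD⟩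

theorem IsPath.skip_loop {A D B : List E} {x y : E}
    (hp : IsPath s r (A ++ x :: D ++ y :: B)) (hxy : s x = s y) :
    IsPath s r (A ++ y :: B) := by
  have hA : IsPath s r (A ++ x :: D) := hp.left_of_append
  refine hA.left_of_append.append hp.right_of_append fun a ha b hb => ?_
  obtain rfl : b = y := by simpa using hb.symm
  rw [← hxy]
  exact (List.isChain_append.mp hA).2.2 a ha x rfl

theorem IsClosedPath.skip_loop {A D B : List E} {x y : E}
    (hp : IsClosedPath s r (A ++ x :: D ++ y :: B)) (hxy : s x = s y) :
    IsClosedPath s r (A ++ y :: B) := by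
  obtain ⟨v, hstart, e, he, hev⟩ := hp
  refine ⟨v, ?_, e, ?_, hev⟩
  · cases A with
    | nil => exact ⟨y, rfl, by obtain ⟨_, ⟨⟩, rfl⟩ := hstart; exact hxy.symm⟩
    | cons a A => simpa [StartsAt] using hstart
  · rwa [List.getLast?_append_cons, ← List.getLast?_append_cons (A ++ x :: D)]

theorem SeparatedCycles.visits_of_visits_skip_loop (hsep : SeparatedCycles s r)
    {A D B : List E} {x y : E} (hD : IsCycle s r (x :: D)) (hxy : s x = s y)
    {c : List E} (hc : IsCycle s r c)
    (hvisit : (cycleVerts s (A ++ x :: D ++ y :: B) ∩ cycleVerts s c).Nonempty) :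
    (cycleVerts s (A ++ y :: B) ∩ cycleVerts s c).Nonempty := by
  obtain ⟨v, ⟨e, he, rfl⟩, hvc⟩ := hvisit
  have hsplit : e ∈ A ++ y :: B ∨ e ∈ x :: D := by
    simp only [List.append_assoc, List.cons_append, List.mem_append, List.mem_cons] at he ⊢
    tauto
  rcases hsplit with hkept | hloop
  · exact ⟨s e, ⟨e, hkept, rfl⟩, hvc⟩
  · have hDc := hsep _ c hD hc ⟨s e, ⟨e, hloop, rfl⟩, hvc⟩
    have hxc : x ∈ c := (Set.ext_iff.mp hDc x).mp List.mem_cons_self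
    exact ⟨s y, ⟨y, by simp, rfl⟩, ⟨x, hxc, hxy⟩⟩

end DetourRemoval

/-- from the proof of Lemma 2.  Suppose distinct cycles of `Γ` have no
common vertex.  Let `C'`, `C''` be cycles, and let `t` be a closed path of minimal
length among closed paths visiting a vertex of `C'` and a vertex of `C''`.  Then the
sources of the edges of `t` are pairwise distinct, i.e. `t` is a cycle. -/
theorem minimal_closed_path_visiting_two_cycles_is_cycle
    (hsep : SeparatedCycles s r) (c c' : List E)
    (hc : IsCycle s r c) (hc' : IsCycle s r c')
    (t : List E) (ht : IsPath s r t) (htc : IsClosedPath s r t)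
    (hvisit : (cycleVerts s t ∩ cycleVerts s c).Nonempty ∧
      (cycleVerts s t ∩ cycleVerts s c').Nonempty)
    (hmin : ∀ t' : List E, IsPath s r t' → IsClosedPath s r t' →
      (cycleVerts s t' ∩ cycleVerts s c).Nonempty →
      (cycleVerts s t' ∩ cycleVerts s c').Nonempty →
      t.length ≤ t'.length) :
    (t.map s).Nodup := by
  by_contra hnd
  obtain ⟨A, D, B, x, y, rfl, hxy, hDnd⟩ := List.exists_split_repeat_of_not_nodup_map s hnd
  have hD := ht.isCycle_of_nodup_loop hxy hDnd
  have hshorter := hmin _ (ht.skip_loop hxy) (htc.skip_loop hxy)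
    (hsep.visits_of_visits_skip_loop hD hxy hc hvisit.1)
    (hsep.visits_of_visits_skip_loop hD hxy hc' hvisit.2)
  simp only [List.length_append, List.length_cons] at hshorter
  omega

end LeavittSetup
end
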